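/- arXiv:2301.09587 — 2 statements merged into one kernel-verified Lean document; each statement's English description precedes it below -/
import Mathlib

section
/- Let n be a non-negative integer and let s and t be complex numbers such that t is not equal to any of −1, −2, …, −n. Then ∑_{k=0}^{n} C(n,k) · C(s,k)/C(t+k,k) = ∏_{i=1}^{n} (s+t+i)/(t+i), where the right-hand side equals C(n+s+t, n)·n!·∏_{i=1}^n (t+i)^{−1} and coincides with the ratio of generalized binomial coefficients C(n+s+t,s)/C(s+t,s) whenever the latter is defined. -/
open Finset

/-- Generalized binomial coefficient `C(z,k) = z(z-1)⋯(z-k+1)/k!`. -/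
noncomputable def cchoose (z : ℂ) (k : ℕ) : ℂ :=
  (∏ i ∈ Finset.range k, (z - i)) / (k.factorial : ℂ)

/-!
Both products on the right are `n! * C(c+n, n)` for `c = s+t` and `c = t`. Since
`C(n,k) * C(t+n,n) = C(t+n,n-k) * C(t+k,k)`, the `k`-th term of the sum equals
`C(s,k) * C(t+n,n-k) / C(t+n,n)`, and by Chu–Vandermonde the numerators add up to `C(s+t+n,n)`.
-/

section BinomialRing

variable {R : Type*} [CommRing R] [BinomialRing R]

theorem Ring.natChoose_mul_choose_add_eq_choose_mul_choose (r : R) {n k : ℕ} (hkn : k ≤ n) :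
    (n.choose k : R) * choose (r + n) n = choose (r + n) (n - k) * choose (r + k) k := by
  have h := choose_smul_choose (r + n) (Nat.sub_le n k)
  rwa [Nat.choose_symm hkn, Nat.sub_sub_self hkn, Nat.cast_sub hkn,
    show r + n - (n - k : R) = r + k by ring, nsmul_eq_mul] at h

theorem Ring.sum_range_choose_mul_choose (s u : R) (n : ℕ) :
    ∑ k ∈ range (n + 1), choose s k * choose u (n - k) = choose (s + u) n := by
  rw [add_choose_eq n (Commute.all s u), Nat.sum_antidiagonal_eq_sum_range_succ
    (fun i j => choose s i * choose u j)]

end BinomialRing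

section Field

variable {K : Type*} [Field K] [CharZero K]

theorem Ring.choose_eq_prod_range_div (r : K) (k : ℕ) :
    Ring.choose r k = (∏ i ∈ range k, (r - i)) / k.factorial := by
  rw [Ring.choose_eq_smul, ← descPochhammer_eval_eq_prod_range, smul_eq_mul, inv_mul_eq_div,
    ← Polynomial.aeval_eq_smeval, ← Polynomial.eval_map_algebraMap, descPochhammer_map]

theorem prod_range_add_sub_eq_prod_Icc (c : K) (n : ℕ) :
    ∏ i ∈ range n, (c + n - i) = ∏ i ∈ Icc 1 n, (c + i) := by
  induction n with
  | zero => simp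
  | succ n ih =>
    rw [prod_range_succ', prod_Icc_succ_top (by omega), ← ih]
    push_cast
    simp only [add_sub_add_right_eq_sub, ← add_assoc, sub_zero, mul_comm]

theorem prod_Icc_add_eq_factorial_mul_choose (c : K) (n : ℕ) :
    ∏ i ∈ Icc 1 n, (c + i) = n.factorial * Ring.choose (c + n) n := by
  rw [Ring.choose_eq_prod_range_div, mul_div_cancel₀ _ (Nat.cast_ne_zero.2 n.factorial_ne_zero),
    prod_range_add_sub_eq_prod_Icc]

theorem sum_choose_mul_choose_div_choose (n : ℕ) (s t : K) (ht : ∀ i ∈ Icc 1 n, t + i ≠ 0) :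
    ∑ k ∈ range (n + 1), (n.choose k : K) * Ring.choose s k / Ring.choose (t + k) k =
      ∏ i ∈ Icc 1 n, (s + t + i) / (t + i) := by
  have hB : Ring.choose (t + n) n ≠ 0 := by
    have h := prod_ne_zero_iff.2 ht
    rw [prod_Icc_add_eq_factorial_mul_choose] at h
    exact right_ne_zero_of_mul h
  have hterm : ∀ k ∈ range (n + 1), (n.choose k : K) * Ring.choose s k / Ring.choose (t + k) k =
      Ring.choose s k * Ring.choose (t + n) (n - k) / Ring.choose (t + n) n := by
    intro k hk
    have hkn : k ≤ n := Nat.lt_succ_iff.1 (mem_range.1 hk)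
    have h := Ring.natChoose_mul_choose_add_eq_choose_mul_choose t hkn
    have hk0 : Ring.choose (t + k) k ≠ 0 :=
      right_ne_zero_of_mul (h ▸ mul_ne_zero (Nat.cast_ne_zero.2 (Nat.choose_pos hkn).ne') hB)
    rw [div_eq_div_iff hk0 hB]
    linear_combination Ring.choose s k * h
  rw [sum_congr rfl hterm, ← sum_div, Ring.sum_range_choose_mul_choose, prod_div_distrib,
    prod_Icc_add_eq_factorial_mul_choose, prod_Icc_add_eq_factorial_mul_choose, add_assoc,
    mul_div_mul_left _ _ (Nat.cast_ne_zero.2 n.factorial_ne_zero)]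

end Field

theorem cchoose_eq_choose (z : ℂ) (k : ℕ) : cchoose z k = Ring.choose z k :=
  (Ring.choose_eq_prod_range_div z k).symm

theorem stmt_2 (n : ℕ) (s t : ℂ)
    (ht : ∀ i : ℕ, 1 ≤ i → i ≤ n → t ≠ -(i : ℂ)) :
    ∑ k ∈ range (n + 1), (n.choose k : ℂ) * cchoose s k / cchoose (t + k) k =
      ∏ i ∈ Finset.Icc 1 n, (s + t + i) / (t + i) := by
  simp only [cchoose_eq_choose]
  refine sum_choose_mul_choose_div_choose n s t fun i hi hti => ?_
  exact ht i (mem_Icc.1 hi).1 (mem_Icc.1 hi).2 (eq_neg_of_add_eq_zero_left hti)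
end

section
/- For every non-negative integer n, ∑_{k=0}^{n} C(2k,k) · H_{n−k}/4^k = ((2n+1)/4^n) · C(2n,n) · (2·H_{2n+1} − H_n − 2), where C(a,b) denotes the ordinary binomial coefficient. -/
/-!
Write `c_k = C(2k,k)/4^k` and `S_n = ∑_{k ≤ n} c_k H_{n-k}`. Since `H_{m+1} - H_m = 1/(m+1)`,
the increments are `S_{n+1} - S_n = A_n := ∑_{k ≤ n} c_k/(n+1-k)`. The ratio
`c_{k+1}/c_k = (2k+1)/(2k+2)` makes the terms with `k ≤ n` of `(n+2) A_{n+1} - (n+3/2) A_n`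
telescope to `-(n+1) c_{n+1}`, which gives the first-order recurrence
`(n+2) A_{n+1} = (n+3/2) A_n + c_{n+1}`, solved by `A_n = c_{n+1} (2 H_{2n+1} - H_n)`.
Summing the increments yields the closed form of `S_n`.
-/

open Finset

/-- The `n`-th harmonic number `H_n = ∑_{j=1}^n 1/j`, with `H_0 = 0`. -/
noncomputable def H (n : ℕ) : ℝ :=
  ∑ j ∈ Finset.range n, 1 / ((j : ℝ) + 1)

lemma H_zero : H 0 = 0 := by
  simp [H]

lemma H_succ (m : ℕ) : H (m + 1) = H m + 1 / ((m : ℝ) + 1) := by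
  rw [H, H, sum_range_succ]

lemma H_two_mul_succ_add_one (n : ℕ) :
    H (2 * (n + 1) + 1) = H (2 * n + 1) + 1 / (2 * (n : ℝ) + 2) + 1 / (2 * (n : ℝ) + 3) := by
  rw [show 2 * (n + 1) + 1 = 2 * n + 1 + 1 + 1 by ring, H_succ, H_succ]
  push_cast
  ring

lemma sum_mul_H_sub_succ (a : ℕ → ℝ) (m : ℕ) :
    ∑ k ∈ range (m + 2), a k * H (m + 1 - k) =
      ∑ k ∈ range (m + 1), a k * H (m - k) + ∑ k ∈ range (m + 1), a k / ((m : ℝ) + 1 - k) := by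
  rw [sum_range_succ, Nat.sub_self, H_zero, mul_zero, add_zero, ← sum_add_distrib]
  refine sum_congr rfl fun k hk => ?_
  have hkm : k ≤ m := Nat.lt_succ_iff.mp (mem_range.mp hk)
  rw [Nat.sub_add_comm hkm, H_succ, Nat.cast_sub hkm]
  ring

noncomputable def scaledCentralBinom (k : ℕ) : ℝ :=
  ((2 * k).choose k : ℝ) / 4 ^ k

lemma scaledCentralBinom_succ (k : ℕ) :
    scaledCentralBinom (k + 1) = scaledCentralBinom k * (2 * k + 1) / (2 * k + 2) := by
  have h : ((k : ℝ) + 1) * ((2 * (k + 1)).choose (k + 1) : ℝ) =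
      2 * (2 * k + 1) * ((2 * k).choose k : ℝ) := by
    exact_mod_cast Nat.succ_mul_centralBinom_succ k
  rw [scaledCentralBinom, scaledCentralBinom, eq_div_iff (by positivity), pow_succ]
  field_simp
  linear_combination 2 * h

lemma sum_scaledCentralBinom_telescope (n : ℕ) :
    ∑ k ∈ range n, scaledCentralBinom k * ((n : ℝ) + k + 1) / (2 * ((n : ℝ) + 1 - k) * (n - k)) =
      n * scaledCentralBinom n := by
  let f : ℕ → ℝ := fun k => scaledCentralBinom k * k / ((n : ℝ) + 1 - k)
  have hstep : ∀ k ∈ range n,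
      scaledCentralBinom k * ((n : ℝ) + k + 1) / (2 * ((n : ℝ) + 1 - k) * (n - k)) =
        f (k + 1) - f k := by
    intro k hk
    have hk : (k : ℝ) + 1 ≤ n := by exact_mod_cast mem_range.mp hk
    have h1 : (n : ℝ) - k ≠ 0 := by linarith
    have h2 : (n : ℝ) + 1 - k ≠ 0 := by linarith
    simp only [f, scaledCentralBinom_succ, Nat.cast_succ, show (n : ℝ) + 1 - (k + 1) = n - k by ring]
    field_simp
    ring
  rw [sum_congr rfl hstep, sum_range_sub]
  simp [f, mul_comm]

noncomputable def scaledCentralBinomRecipSum (n : ℕ) : ℝ :=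
  ∑ k ∈ range (n + 1), scaledCentralBinom k / ((n : ℝ) + 1 - k)

lemma scaledCentralBinomRecipSum_succ (n : ℕ) :
    ((n : ℝ) + 2) * scaledCentralBinomRecipSum (n + 1) =
      ((n : ℝ) + 3 / 2) * scaledCentralBinomRecipSum n + scaledCentralBinom (n + 1) := by
  have hterm : ∀ k ∈ range (n + 1),
      ((n : ℝ) + 2) * (scaledCentralBinom k / ((n + 1 : ℕ) + 1 - k)) -
          ((n : ℝ) + 3 / 2) * (scaledCentralBinom k / ((n : ℝ) + 1 - k)) =
        -(scaledCentralBinom k * ((n + 1 : ℕ) + k + 1) /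
          (2 * ((n + 1 : ℕ) + 1 - k) * ((n + 1 : ℕ) - k))) := by
    intro k hk
    have hk : (k : ℝ) + 1 ≤ n + 1 := by exact_mod_cast mem_range.mp hk
    have h1 : (n : ℝ) + 1 - k ≠ 0 := by linarith
    have h2 : (n : ℝ) + 1 + 1 - k ≠ 0 := by linarith
    push_cast
    field_simp
    ring
  have hsum := sum_congr rfl hterm
  rw [sum_neg_distrib, sum_scaledCentralBinom_telescope, sum_sub_distrib, ← mul_sum,
    ← mul_sum] at hsum
  rw [scaledCentralBinomRecipSum, scaledCentralBinomRecipSum, sum_range_succ]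
  push_cast at hsum ⊢
  rw [show (n : ℝ) + 1 + 1 - (n + 1) = 1 by ring, div_one]
  linarith

lemma scaledCentralBinomRecipSum_eq (n : ℕ) :
    scaledCentralBinomRecipSum n = scaledCentralBinom (n + 1) * (2 * H (2 * n + 1) - H n) := by
  induction n with
  | zero => norm_num [scaledCentralBinomRecipSum, scaledCentralBinom, H]
  | succ n ih =>
    apply mul_left_cancel₀ (by positivity : (n : ℝ) + 2 ≠ 0)
    rw [scaledCentralBinomRecipSum_succ, ih, scaledCentralBinom_succ (n + 1),
      H_two_mul_succ_add_one, H_succ n]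
    push_cast
    field_simp
    ring

lemma sum_scaledCentralBinom_mul_H (n : ℕ) :
    ∑ k ∈ range (n + 1), scaledCentralBinom k * H (n - k) =
      (2 * (n : ℝ) + 1) * scaledCentralBinom n * (2 * H (2 * n + 1) - H n - 2) := by
  induction n with
  | zero => norm_num [H]
  | succ n ih =>
    rw [sum_mul_H_sub_succ, ih, ← scaledCentralBinomRecipSum, scaledCentralBinomRecipSum_eq,
      scaledCentralBinom_succ, H_two_mul_succ_add_one, H_succ n]
    push_cast
    field_simp
    ring

theorem stmt_17 (n : ℕ) :
    ∑ k ∈ range (n + 1), ((2 * k).choose k : ℝ) * H (n - k) / 4 ^ k =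
      ((2 * (n : ℝ) + 1) / 4 ^ n) * ((2 * n).choose n : ℝ) *
        (2 * H (2 * n + 1) - H n - 2) := by
  convert sum_scaledCentralBinom_mul_H n using 1
  · exact sum_congr rfl fun k _ => by rw [scaledCentralBinom, div_mul_eq_mul_div]
  · rw [scaledCentralBinom]
    ring
end
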